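/- For every ε > 0 there exists a constant C(ε) such that the following holds. Let p be a prime, let Γ be a multiplicative subgroup of F_p with C(ε) ≤ |Γ| ≤ p^{6/7−ε}, and let ξ ∈ F_p be nonzero. Then for every set B ⊆ F_p one has ξ·Γ + 1 ≠ B/B, where ξ·Γ + 1 = {ξγ + 1 : γ ∈ Γ}. -/

import Mathlib

/-!
Since `B/B` is closed under `z ↦ z⁻¹` away from `0`, so is `ξΓ + 1`. Unwinding this, with
`t = -ξ` the group `Γ` is closed under the reflection `δ ↦ t - δ` (for `δ ≠ t`).
If `t ∉ Γ`, composing the reflections `δ ↦ t - δ` and `δ ↦ g t - δ` (`g ∈ Γ`, `g ≠ 1`) gives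
a nonzero translation preserving `Γ`, so `Γ` would contain `0`. If `t ∈ Γ`, scaling by `t` shows
that `Γ ∪ {0}` is stable under `x ↦ 1 - x` and `x ↦ -x`, hence under `x ↦ x + 1`, so
`Γ = F_p^*`; this contradicts `|Γ| ≤ p^(6/7 - ε)` once `|Γ| ≥ 2^7`.
-/

open Pointwise

/-- `G` is (the underlying set of) a multiplicative subgroup of `F_p`, i.e. a subgroup of the
multiplicative group `F_p^* = F_p \ {0}`, regarded as a subset of `F_p`. -/
def IsMulSubgroup {p : ℕ} (G : Finset (ZMod p)) : Prop :=
  ∃ H : Subgroup (ZMod p)ˣ,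
    (G : Set (ZMod p)) = (fun u : (ZMod p)ˣ => (u : ZMod p)) '' (H : Set (ZMod p)ˣ)

/-- The ratio set `B/B = {b/b' : b, b' ∈ B, b' ≠ 0, b ≠ b'}`. -/
def ratioSet {F : Type*} [Field F] [DecidableEq F] (B : Finset F) : Finset F :=
  ((B ×ˢ B).filter fun t => t.2 ≠ 0 ∧ t.1 ≠ t.2).image fun t => t.1 / t.2

lemma inv_mem_ratioSet {F : Type*} [Field F] [DecidableEq F] {B : Finset F} {z : F}
    (hz : z ∈ ratioSet B) (hz0 : z ≠ 0) : z⁻¹ ∈ ratioSet B := by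
  simp only [ratioSet, Finset.mem_image, Finset.mem_filter, Finset.mem_product] at hz ⊢
  obtain ⟨⟨b, b'⟩, ⟨⟨hb, hb'⟩, hb'0, hne⟩, rfl⟩ := hz
  have hb0 : b ≠ 0 := by
    rintro rfl
    simp at hz0
  exact ⟨(b', b), ⟨⟨hb', hb⟩, hb0, fun h => hne h.symm⟩, (inv_div _ _).symm⟩

lemma neg_sub_mem_of_image_eq_ratioSet {F : Type*} [Field F] [DecidableEq F]
    {G B : Finset F} {ξ : F} (hξ : ξ ≠ 0) (hinv : ∀ x ∈ G, x⁻¹ ∈ G)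
    (heq : G.image (fun g => ξ * g + 1) = ratioSet B)
    {δ : F} (hδ : δ ∈ G) (hδ0 : δ ≠ 0) (hδξ : δ ≠ -ξ) : -ξ - δ ∈ G := by
  have hξδ : ξ + δ ≠ 0 := fun h => hδξ (by linear_combination h)
  have hs_eq : ξ * δ⁻¹ + 1 = (ξ + δ) / δ := by field_simp
  have hs : ξ * δ⁻¹ + 1 ∈ ratioSet B := heq ▸ Finset.mem_image_of_mem _ (hinv δ hδ)
  have hs0 : ξ * δ⁻¹ + 1 ≠ 0 := hs_eq ▸ div_ne_zero hξδ hδ0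
  obtain ⟨γ, hγ, hγs⟩ := Finset.mem_image.1 (heq ▸ inv_mem_ratioSet hs hs0)
  have hγ_eq : γ⁻¹ = -ξ - δ := by
    rw [hs_eq, inv_div] at hγs
    field_simp at hγs
    refine inv_eq_of_mul_eq_one_right (mul_left_cancel₀ hξ ?_)
    linear_combination -hγs
  exact hγ_eq ▸ hinv γ hγ

theorem ZMod.mem_of_forall_add_mem {p : ℕ} [Fact p.Prime] {S : Set (ZMod p)} {c : ZMod p}
    (hc : c ≠ 0) (hS : ∀ x ∈ S, x + c ∈ S) {a : ZMod p} (ha : a ∈ S) (b : ZMod p) : b ∈ S := by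
  have hn : ∀ n : ℕ, a + n * c ∈ S := by
    intro n
    induction n with
    | zero => simpa using ha
    | succ n ih => simpa [add_mul, add_assoc] using hS _ ih
  simpa [ZMod.natCast_zmod_val, hc] using hn ((b - a) / c).val

theorem two_mul_rpow_six_sevenths_le {x : ℝ} (hx : 2 ^ 7 ≤ x) : 2 * x ^ ((6 : ℝ) / 7) ≤ x := by
  have hx0 : 0 < x := by linarith
  have h2 : (2 : ℝ) ≤ x ^ ((1 : ℝ) / 7) := by
    calc (2 : ℝ) = ((2 : ℝ) ^ 7) ^ ((1 : ℝ) / 7) := by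
          rw [← Real.rpow_natCast, ← Real.rpow_mul (by norm_num)]; norm_num
      _ ≤ x ^ ((1 : ℝ) / 7) := Real.rpow_le_rpow (by norm_num) hx (by norm_num)
  calc 2 * x ^ ((6 : ℝ) / 7) ≤ x ^ ((1 : ℝ) / 7) * x ^ ((6 : ℝ) / 7) := by
        gcongr
    _ = x := by rw [← Real.rpow_add hx0]; norm_num

namespace IsMulSubgroup

variable {p : ℕ} {G : Finset (ZMod p)}

lemma exists_subgroup_mem_iff (hG : IsMulSubgroup G) :
    ∃ H : Subgroup (ZMod p)ˣ, ∀ x, x ∈ G ↔ ∃ u ∈ H, (u : ZMod p) = x := by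
  obtain ⟨H, hH⟩ := hG
  exact ⟨H, fun x => by rw [← Finset.mem_coe, hH]; rfl⟩

lemma ne_zero [Fact p.Prime] (hG : IsMulSubgroup G) {x : ZMod p} (hx : x ∈ G) : x ≠ 0 := by
  obtain ⟨H, hH⟩ := hG.exists_subgroup_mem_iff
  obtain ⟨u, -, rfl⟩ := (hH x).1 hx
  exact u.ne_zero

lemma one_mem (hG : IsMulSubgroup G) : 1 ∈ G := by
  obtain ⟨H, hH⟩ := hG.exists_subgroup_mem_iff
  exact (hH 1).2 ⟨1, H.one_mem, Units.val_one⟩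

lemma mul_mem (hG : IsMulSubgroup G) {x y : ZMod p} (hx : x ∈ G) (hy : y ∈ G) : x * y ∈ G := by
  obtain ⟨H, hH⟩ := hG.exists_subgroup_mem_iff
  obtain ⟨u, hu, rfl⟩ := (hH x).1 hx
  obtain ⟨v, hv, rfl⟩ := (hH y).1 hy
  exact (hH _).2 ⟨u * v, H.mul_mem hu hv, Units.val_mul u v⟩

lemma inv_mem (hG : IsMulSubgroup G) {x : ZMod p} (hx : x ∈ G) : x⁻¹ ∈ G := by
  obtain ⟨H, hH⟩ := hG.exists_subgroup_mem_iff
  obtain ⟨u, hu, rfl⟩ := (hH x).1 hx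
  exact (hH _).2 ⟨u⁻¹, H.inv_mem hu, (ZMod.inv_coe_unit u).symm⟩

variable [Fact p.Prime]

lemma false_of_forall_sub_mem (hG : IsMulSubgroup G) {t : ZMod p} (ht : t ≠ 0)
    (hrefl : ∀ δ ∈ G, t - δ ∈ G) {g : ZMod p} (hg : g ∈ G) (hg1 : g ≠ 1) : False := by
  have htrans : ∀ δ ∈ G, δ + (g - 1) * t ∈ G := by
    intro δ hδ
    have h := hG.mul_mem hg (hrefl _ (hG.mul_mem (hG.inv_mem hg) (hrefl δ hδ)))
    convert h using 1
    field_simp [hG.ne_zero hg]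
    ring
  have hc : (g - 1) * t ≠ 0 := mul_ne_zero (sub_ne_zero.2 hg1) ht
  exact hG.ne_zero (ZMod.mem_of_forall_add_mem (S := G) hc htrans hG.one_mem 0) rfl

lemma mem_of_one_sub_mem (hG : IsMulSubgroup G) (h : ∀ x ∈ G, x ≠ 1 → 1 - x ∈ G)
    {g : ZMod p} (hg : g ∈ G) (hg1 : g ≠ 1) {x : ZMod p} (hx : x ≠ 0) : x ∈ G := by
  have hneg_one : -1 ∈ G := by
    -- `-1 = (1 - g⁻¹) * g / (1 - g)`
    have h' := hG.mul_mem (hG.mul_mem (h _ (hG.inv_mem hg) (inv_ne_one.2 hg1)) hg)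
      (hG.inv_mem (h g hg hg1))
    have hg0 := hG.ne_zero hg
    have hg1' : 1 - g ≠ 0 := sub_ne_zero.2 (Ne.symm hg1)
    convert h' using 1
    field_simp
    ring
  have hsucc : ∀ y ∈ {y | y = 0 ∨ y ∈ G}, y + 1 ∈ {y : ZMod p | y = 0 ∨ y ∈ G} := by
    rintro y (rfl | hy)
    · exact Or.inr (by simpa using hG.one_mem)
    · by_cases hy1 : -y = 1
      · exact Or.inl (by linear_combination -hy1)
      · have h' := h (-y) (by simpa using hG.mul_mem hneg_one hy) hy1
        exact Or.inr (by simpa [add_comm] using h')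
  exact (ZMod.mem_of_forall_add_mem one_ne_zero hsucc (Or.inl rfl) x).resolve_left hx

lemma mem_of_forall_ne_sub_mem (hG : IsMulSubgroup G) {t : ZMod p} (ht : t ≠ 0)
    (hrefl : ∀ δ ∈ G, δ ≠ t → t - δ ∈ G) {g : ZMod p} (hg : g ∈ G) (hg1 : g ≠ 1)
    {x : ZMod p} (hx : x ≠ 0) : x ∈ G := by
  by_cases htG : t ∈ G
  · refine hG.mem_of_one_sub_mem (fun y hy hy1 => ?_) hg hg1 hx
    have hty : t * y ≠ t := fun h => hy1 (mul_left_cancel₀ ht (h.trans (mul_one t).symm))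
    have h := hG.mul_mem (hG.inv_mem htG) (hrefl _ (hG.mul_mem htG hy) hty)
    convert h using 1
    field_simp
  · exact (hG.false_of_forall_sub_mem ht (fun δ hδ => hrefl δ hδ (fun h => htG (h ▸ hδ)))
      hg hg1).elim

end IsMulSubgroup

/-- For every `ε > 0` there is `C(ε)` such that for every prime `p`, every multiplicative
subgroup `Γ ⊆ F_p` with `C(ε) ≤ |Γ| ≤ p^(6/7-ε)` and every `ξ ≠ 0`, for every set `B ⊆ F_p`
one has `ξ·Γ + 1 ≠ B/B`. -/
theorem statement1 :
    ∀ ε : ℝ, 0 < ε → ∃ C : ℝ, ∀ (p : ℕ) [Fact p.Prime],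
      ∀ G : Finset (ZMod p), IsMulSubgroup G →
        C ≤ (G.card : ℝ) → (G.card : ℝ) ≤ (p : ℝ) ^ ((6 : ℝ) / 7 - ε) →
        ∀ ξ : ZMod p, ξ ≠ 0 →
        ∀ B : Finset (ZMod p), (G.image fun g => ξ * g + 1) ≠ ratioSet B := by
  intro ε hε
  refine ⟨2 ^ 7, fun p _ G hG hC hup ξ hξ B heq => ?_⟩
  have hrefl : ∀ δ ∈ G, δ ≠ -ξ → -ξ - δ ∈ G := fun δ hδ =>
    neg_sub_mem_of_image_eq_ratioSet hξ (fun _ => hG.inv_mem) heq hδ (hG.ne_zero hδ)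
  have hG_two : 1 < G.card := by exact_mod_cast (by norm_num : (1 : ℝ) < 2 ^ 7).trans_le hC
  obtain ⟨g, hg, hg1⟩ := G.exists_mem_ne hG_two 1
  have hcard : (p : ℝ) ≤ G.card + 1 := by
    have hsub : Finset.univ.erase (0 : ZMod p) ⊆ G := fun x hx =>
      hG.mem_of_forall_ne_sub_mem (neg_ne_zero.2 hξ) hrefl hg hg1 (Finset.ne_of_mem_erase hx)
    have := Finset.card_le_card hsub
    rw [Finset.card_erase_of_mem (Finset.mem_univ _), Finset.card_univ, ZMod.card] at this
    exact_mod_cast (by omega : p ≤ G.card + 1)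
  have hp : (G.card : ℝ) ≤ p := by
    exact_mod_cast (Finset.card_le_univ G).trans_eq (ZMod.card p)
  have hmono : (p : ℝ) ^ ((6 : ℝ) / 7 - ε) ≤ (p : ℝ) ^ ((6 : ℝ) / 7) :=
    Real.rpow_le_rpow_of_exponent_le (by linarith) (by linarith)
  have hhalf := two_mul_rpow_six_sevenths_le (x := p) (by linarith)
  linarith
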